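/- arXiv:2604.14081 — 2 statements merged into one kernel-verified Lean document; each statement's English description precedes it below -/
import Mathlib

section
/- Let N ≥ 2 be a natural number. Work in ℂ^N with standard basis (e_x)_{x ∈ Fin N}, let φ = (1/√N)·∑_x e_x, fix a target t ∈ Fin N, let U be the linear map with U e_t = −e_t and U e_x = e_x for x ≠ t, let D ψ = 2⟨φ,ψ⟩φ − ψ, and let G = D ∘ U. Set λ = arcsin(1/√N) and define ψ± = (1/√2)·e_t ± (i/√2)·(1/√(N−1))·∑_{x ≠ t} e_x. Then G ψ⁺ = exp(2iλ)·ψ⁺ and G ψ⁻ = exp(−2iλ)·ψ⁻. -/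
open Real Finset Complex ComplexConjugate

/-! On vectors taking a value `a` at the target and a value `b` everywhere else, the oracle
negates `a` and the diffusion mixes `a` and `b` linearly, so the Grover iterate acts on `(a, b)`
by a 2×2 matrix. For `b = ± i a / √(N - 1)` this matrix has eigenvalue
`(N - 2) / N ± 2 i √(N - 1) / N`, which is `exp (± 2 i λ)` because `sin λ = 1 / √N` and
`cos λ = √(N - 1) / √N`. -/

theorem cexp_two_mul_I_arcsin_inv_sqrt {n : ℝ} (hn : 1 ≤ n) :
    cexp (2 * I * arcsin (1 / √n)) = (n - 2) / n + 2 * √(n - 1) / n * I := by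
  have hn0 : 0 < √n := Real.sqrt_pos.2 (by linarith)
  have hle : 1 / √n ≤ 1 := by
    rw [div_le_one hn0, Real.one_le_sqrt]; exact hn
  have hsin : Real.sin (arcsin (1 / √n)) = 1 / √n :=
    Real.sin_arcsin (by linarith [one_div_pos.2 hn0]) hle
  have hcos : Real.cos (arcsin (1 / √n)) = √(n - 1) / √n := by
    rw [Real.cos_arcsin, div_pow, one_pow, Real.sq_sqrt (by linarith),
      ← Real.sqrt_div' _ (by linarith : 0 ≤ n)]
    congr 1
    field_simp
  have hsq : ((√n : ℝ) : ℂ) ^ 2 = n := by exact_mod_cast Real.sq_sqrt (by linarith)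
  have hsq1 : ((√(n - 1) : ℝ) : ℂ) ^ 2 = n - 1 := by exact_mod_cast Real.sq_sqrt (by linarith)
  have hne : ((√n : ℝ) : ℂ) ≠ 0 := by exact_mod_cast hn0.ne'
  rw [show 2 * I * arcsin (1 / √n) = arcsin (1 / √n) * I + arcsin (1 / √n) * I by ring,
    Complex.exp_add, Complex.exp_mul_I, ← ofReal_cos, ← ofReal_sin, hsin, hcos, ← hsq]
  push_cast
  field_simp
  linear_combination hsq1 + I_sq - hsq

theorem cexp_neg_two_mul_I_arcsin_inv_sqrt {n : ℝ} (hn : 1 ≤ n) :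
    cexp (-(2 * I * arcsin (1 / √n))) = (n - 2) / n + 2 * √(n - 1) / n * -I := by
  rw [show -(2 * I * arcsin (1 / √n)) = conj (2 * I * arcsin (1 / √n) : ℂ) by simp [map_ofNat],
    Complex.exp_conj, cexp_two_mul_I_arcsin_inv_sqrt hn]
  simp [map_ofNat]

namespace Grover

variable {ι : Type*} [DecidableEq ι]

def twoLevel (t : ι) (a b : ℂ) : ι → ℂ := fun x => if x = t then a else b

theorem sum_twoLevel [Fintype ι] (t : ι) (a b : ℂ) :
    ∑ x, twoLevel t a b x = a + (Fintype.card ι - 1) * b := by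
  have h : ∀ x, twoLevel t a b x = b + if x = t then a - b else 0 := fun x => by
    unfold twoLevel; split_ifs <;> ring
  simp only [h, Finset.sum_add_distrib, Finset.sum_ite_eq', Finset.mem_univ, if_true,
    Finset.sum_const, Finset.card_univ, nsmul_eq_mul]
  ring

theorem reflection_twoLevel {U : (ι → ℂ) → ι → ℂ} {t : ι}
    (hU : ∀ ψ x, U ψ x = if x = t then -ψ x else ψ x) (a b : ℂ) :
    U (twoLevel t a b) = twoLevel t (-a) b := by
  funext x
  rw [hU]
  unfold twoLevel
  split_ifs <;> rfl

theorem diffusion_twoLevel [Fintype ι] {φ : ι → ℂ} {c : ℂ} (hφ : ∀ x, φ x = c)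
    {D : (ι → ℂ) → ι → ℂ} (hD : ∀ ψ x, D ψ x = 2 * (∑ y, conj (φ y) * ψ y) * φ x - ψ x)
    (t : ι) (a b : ℂ) :
    D (twoLevel t a b) =
      twoLevel t (2 * normSq c * (a + (Fintype.card ι - 1) * b) - a)
        (2 * normSq c * (a + (Fintype.card ι - 1) * b) - b) := by
  have hsum : ∑ y, conj (φ y) * twoLevel t a b y = conj c * (a + (Fintype.card ι - 1) * b) := by
    simp only [hφ, ← Finset.mul_sum, sum_twoLevel]
  funext x
  rw [hD, hsum, hφ, normSq_eq_conj_mul_self]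
  unfold twoLevel
  split_ifs <;> ring

theorem groverIterate_twoLevel [Fintype ι] {U D : (ι → ℂ) → ι → ℂ} {φ : ι → ℂ} {c : ℂ} {t : ι}
    (hU : ∀ ψ x, U ψ x = if x = t then -ψ x else ψ x) (hφ : ∀ x, φ x = c)
    (hD : ∀ ψ x, D ψ x = 2 * (∑ y, conj (φ y) * ψ y) * φ x - ψ x)
    (hc : normSq c * Fintype.card ι = 1) {s j : ℂ} (hs : s ^ 2 = Fintype.card ι - 1)
    (hs0 : s ≠ 0) (hj : j ^ 2 = -1) (a : ℂ) :
    D (U (twoLevel t a (j * a / s))) =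
      ((Fintype.card ι - 2) / Fintype.card ι + 2 * s / Fintype.card ι * j) •
        twoLevel t a (j * a / s) := by
  have hw : (normSq c : ℂ) = 1 / Fintype.card ι :=
    eq_one_div_of_mul_eq_one_left (by exact_mod_cast hc)
  have hn : (Fintype.card ι : ℂ) ≠ 0 := by exact_mod_cast right_ne_zero_of_mul_eq_one hc
  rw [reflection_twoLevel hU, diffusion_twoLevel hφ hD, hw]
  funext x
  simp only [Pi.smul_apply, smul_eq_mul, twoLevel]
  generalize (Fintype.card ι : ℂ) = n at hn hs ⊢
  obtain rfl : n = s ^ 2 + 1 := by rw [hs]; ring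
  split_ifs
  · field_simp
    ring
  · field_simp
    linear_combination (-2 * s * a) * hj

end Grover

/-- Eigenvalue–eigenvector computation for the Grover iterate (Appendix E of the paper). -/
theorem stmt_10 (N : ℕ) (hN : 2 ≤ N)
    (φ : Fin N → ℂ) (hφ : ∀ x, φ x = (1 / Real.sqrt N : ℝ))
    (t : Fin N)
    (U : (Fin N → ℂ) → (Fin N → ℂ))
    (hU : ∀ ψ x, U ψ x = if x = t then -ψ x else ψ x)
    (D : (Fin N → ℂ) → (Fin N → ℂ))
    (hD : ∀ ψ x, D ψ x = 2 * (∑ y, (starRingEnd ℂ) (φ y) * ψ y) * φ x - ψ x)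
    (G : (Fin N → ℂ) → (Fin N → ℂ)) (hG : G = D ∘ U)
    (lam : ℝ) (hlam : lam = Real.arcsin (1 / Real.sqrt N))
    (ψp ψm : Fin N → ℂ)
    (hψp : ∀ x, ψp x = if x = t then ((1 / Real.sqrt 2 : ℝ) : ℂ)
      else Complex.I * (1 / Real.sqrt 2 : ℝ) * (1 / Real.sqrt ((N : ℝ) - 1) : ℝ))
    (hψm : ∀ x, ψm x = if x = t then ((1 / Real.sqrt 2 : ℝ) : ℂ)
      else -(Complex.I * (1 / Real.sqrt 2 : ℝ) * (1 / Real.sqrt ((N : ℝ) - 1) : ℝ))) :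
    (∀ x, G ψp x = Complex.exp (2 * Complex.I * lam) * ψp x) ∧
    (∀ x, G ψm x = Complex.exp (-(2 * Complex.I * lam)) * ψm x) := by
  subst hG hlam
  have hN2 : (2 : ℝ) ≤ N := by exact_mod_cast hN
  have hN1 : (1 : ℝ) ≤ N := by linarith
  set s : ℂ := ((√((N : ℝ) - 1) : ℝ) : ℂ) with hs_def
  have hs : s ^ 2 = Fintype.card (Fin N) - 1 := by
    rw [Fintype.card_fin, hs_def, ← ofReal_pow, Real.sq_sqrt (by linarith)]; push_cast; ring
  have hs0 : s ≠ 0 := by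
    rw [hs_def, ofReal_ne_zero, Real.sqrt_ne_zero']
    linarith
  have hc : normSq ((1 / √N : ℝ) : ℂ) * Fintype.card (Fin N) = 1 := by
    rw [normSq_ofReal, Fintype.card_fin, ← sq, div_pow, Real.sq_sqrt (by linarith)]
    field_simp
  set a : ℂ := ((1 / √2 : ℝ) : ℂ)
  have hb : I * a * ((1 / √((N : ℝ) - 1) : ℝ) : ℂ) = I * a / s := by
    rw [ofReal_div, ofReal_one, ← hs_def]; ring
  have hψp' : ψp = Grover.twoLevel t a (I * a / s) := by
    funext x; rw [hψp, hb]; rfl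
  have hψm' : ψm = Grover.twoLevel t a (-I * a / s) := by
    funext x; rw [hψm, hb, neg_mul, neg_div]; rfl
  refine ⟨fun x => ?_, fun x => ?_⟩
  · rw [hψp', Function.comp_apply, Grover.groverIterate_twoLevel hU hφ hD hc hs hs0 I_sq,
      cexp_two_mul_I_arcsin_inv_sqrt hN1, Pi.smul_apply, smul_eq_mul, Fintype.card_fin]
    push_cast
    rfl
  · have hj : (-I) ^ 2 = -1 := by rw [neg_sq, I_sq]
    rw [hψm', Function.comp_apply, Grover.groverIterate_twoLevel hU hφ hD hc hs hs0 hj,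
      cexp_neg_two_mul_I_arcsin_inv_sqrt hN1, Pi.smul_apply, smul_eq_mul, Fintype.card_fin]
    push_cast
    rfl
end

section
/- Let A ≥ 2 and B ≥ 2 be natural numbers and set N = A·B. Work in ℂ^N with standard basis indexed by pairs (u,v) ∈ Fin A × Fin B. Fix a target (t*,t'), let U flip the sign of the coordinate at (t*,t') and fix all other basis vectors, and let the local Grover iterate be G₃ = D_loc ∘ U where (D_loc ψ)(u,v) = (2/B)·∑_{v'} ψ(u,v') − ψ(u,v). Set θ₁ = arcsin(1/√N) and θ' = arcsin(1/√B). Fix a natural number p₁, write C = cos((2p₁+1)·θ₁), and let v ∈ ℂ^N be the vector whose coordinate at (t*,t') is sin((2p₁+1)·θ₁) and whose coordinate at every other index is C/√(N−1). Then for every natural number p₂, the coordinates of G₃^{p₂} v are: sin((2p₁+1)θ₁)·cos(2p₂θ') + (√(B−1)/√(N−1))·C·sin(2p₂θ') at (t*,t'); (−sin((2p₁+1)θ₁)·sin(2p₂θ') + (√(B−1)/√(N−1))·C·cos(2p₂θ'))/√(B−1) at (t*,v') for every v' ≠ t'; and C/√(N−1) at (u,v') for every u ≠ t* and every v'. -/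
/-!
Only the marked row `t*` evolves. Writing `a` for the target amplitude and `b` for the common
amplitude of the rest of that row, `G₃` acts on `(a, √(B - 1) · b)` as the rotation by
`2θ'`, because `cos 2θ' = 1 - 2/B` and `sin 2θ' = 2√(B - 1)/B`; every other row is constant,
and the row diffusion fixes constant rows.
-/

open Real

lemma Fintype.sum_ite_eq_add_card_sub_one_mul {β R : Type*} [Fintype β] [DecidableEq β]
    [CommRing R] (t : β) (x y : R) :
    ∑ w, (if w = t then x else y) = x + (Fintype.card β - 1) * y := by
  rw [Fintype.sum_eq_add_sum_compl t, if_pos rfl,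
    Finset.sum_congr rfl fun w hw => if_neg (Finset.mem_compl.1 hw ∘ Finset.mem_singleton.2),
    Finset.sum_const, Finset.card_compl, Finset.card_singleton, nsmul_eq_mul,
    Nat.cast_sub (Fintype.card_pos_iff.2 ⟨t⟩), Nat.cast_one]

namespace Real

lemma cos_two_mul_arcsin {x : ℝ} (hx₁ : -1 ≤ x) (hx₂ : x ≤ 1) :
    cos (2 * arcsin x) = 1 - 2 * x ^ 2 := by
  rw [cos_two_mul', sin_arcsin hx₁ hx₂, cos_arcsin, sq_sqrt (by nlinarith)]
  ring

lemma sin_two_mul_arcsin {x : ℝ} (hx₁ : -1 ≤ x) (hx₂ : x ≤ 1) :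
    sin (2 * arcsin x) = 2 * x * √(1 - x ^ 2) := by
  rw [sin_two_mul, sin_arcsin hx₁ hx₂, cos_arcsin]

lemma one_div_sqrt_mem_Icc {n : ℝ} (hn : 1 ≤ n) : 1 / √n ∈ Set.Icc (-1) 1 := by
  have : 0 < 1 / √n := by positivity
  exact ⟨by linarith, div_le_one_of_le₀ (one_le_sqrt.2 hn) (sqrt_nonneg n)⟩

lemma cos_two_mul_arcsin_inv_sqrt {n : ℝ} (hn : 1 ≤ n) :
    cos (2 * arcsin (1 / √n)) = 1 - 2 / n := by
  obtain ⟨h₁, h₂⟩ := one_div_sqrt_mem_Icc hn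
  rw [cos_two_mul_arcsin h₁ h₂, div_pow, sq_sqrt (by linarith)]
  ring

lemma sin_two_mul_arcsin_inv_sqrt {n : ℝ} (hn : 1 ≤ n) :
    sin (2 * arcsin (1 / √n)) = 2 * √(n - 1) / n := by
  obtain ⟨h₁, h₂⟩ := one_div_sqrt_mem_Icc hn
  have hn₀ : 0 < n := by linarith
  rw [sin_two_mul_arcsin h₁ h₂, div_pow, sq_sqrt hn₀.le,
    show 1 - 1 ^ 2 / n = (n - 1) / n by field_simp, sqrt_div (by linarith)]
  field_simp
  rw [sq_sqrt hn₀.le]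

end Real

lemma Function.iterate_apply_eq_of_rotation {X : Type*} {G : X → X} (f : ℝ → ℝ → X) (φ : ℝ)
    (hG : ∀ x y, G (f x y) = f (cos φ * x + sin φ * y) (-sin φ * x + cos φ * y))
    (p : ℕ) (x y : ℝ) :
    G^[p] (f x y) =
      f (cos (p * φ) * x + sin (p * φ) * y) (-sin (p * φ) * x + cos (p * φ) * y) := by
  induction p with
  | zero => simp
  | succ p ih =>
    rw [Function.iterate_succ_apply', ih, hG, Nat.cast_succ, add_one_mul, cos_add, sin_add]
    congr 1 <;> ring

def phaseFlip {ι : Type*} [DecidableEq ι] (t : ι) (ψ : ι → ℂ) : ι → ℂ :=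
  fun i => if i = t then -ψ i else ψ i

section MarkedRow

variable {α β : Type*} [DecidableEq α] [DecidableEq β]

def markedRowState (t : α × β) (a b g : ℂ) : α × β → ℂ :=
  fun i => if i.1 = t.1 then if i.2 = t.2 then a else b else g

noncomputable def rowDiffusion [Fintype β] (ψ : α × β → ℂ) : α × β → ℂ :=
  fun i => 2 / Fintype.card β * ∑ w, ψ (i.1, w) - ψ i

lemma phaseFlip_markedRowState (t : α × β) (a b g : ℂ) :
    phaseFlip t (markedRowState t a b g) = markedRowState t (-a) b g := by
  funext ⟨u, w⟩
  by_cases hu : u = t.1 <;> by_cases hw : w = t.2 <;>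
    simp [phaseFlip, markedRowState, Prod.ext_iff, hu, hw]

lemma rowDiffusion_markedRowState [Fintype β] (t : α × β) (a b g : ℂ) :
    rowDiffusion (markedRowState t a b g) =
      markedRowState t (2 / Fintype.card β * (a + (Fintype.card β - 1) * b) - a)
        (2 / Fintype.card β * (a + (Fintype.card β - 1) * b) - b) g := by
  have hn : (Fintype.card β : ℂ) ≠ 0 := Nat.cast_ne_zero.2 (Fintype.card_pos_iff.2 ⟨t.2⟩).ne'
  funext ⟨u, w⟩
  by_cases hu : u = t.1
  · simp only [rowDiffusion, markedRowState, hu, if_true, Fintype.sum_ite_eq_add_card_sub_one_mul]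
    split_ifs <;> rfl
  · simp only [rowDiffusion, markedRowState, hu, if_false, Finset.sum_const, Finset.card_univ,
      nsmul_eq_mul]
    field_simp
    ring

lemma rowDiffusion_phaseFlip_markedRowState_eq_rotation [Fintype β] {n : ℕ}
    (hβ : Fintype.card β = n) (hn : 2 ≤ n) (t : α × β) (g x y : ℝ) :
    rowDiffusion (phaseFlip t (markedRowState t x ↑(y / √(n - 1)) g)) =
      markedRowState t
        ↑(cos (2 * arcsin (1 / √n)) * x + sin (2 * arcsin (1 / √n)) * y)
        ↑((-sin (2 * arcsin (1 / √n)) * x + cos (2 * arcsin (1 / √n)) * y) / √(n - 1)) g := by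
  have hn₂ : (2 : ℝ) ≤ n := by exact_mod_cast hn
  have hn₁ : (1 : ℝ) ≤ n := by linarith
  have hn₀ : (n : ℂ) ≠ 0 := by exact_mod_cast (by omega : n ≠ 0)
  have hr : ((√((n : ℝ) - 1) : ℝ) : ℂ) ≠ 0 := by
    exact_mod_cast (sqrt_pos.2 (by linarith : (0 : ℝ) < n - 1)).ne'
  have hr₂ : ((√((n : ℝ) - 1) : ℝ) : ℂ) ^ 2 = n - 1 := by
    exact_mod_cast sq_sqrt (by linarith : (0 : ℝ) ≤ n - 1)
  rw [phaseFlip_markedRowState, rowDiffusion_markedRowState, hβ,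
    cos_two_mul_arcsin_inv_sqrt hn₁, sin_two_mul_arcsin_inv_sqrt hn₁]
  congr 1 <;> push_cast <;> field_simp
  · linear_combination (-2 * y) * hr₂
  · ring

end MarkedRow

theorem stmt_11_general (A B : ℕ) (hB : 2 ≤ B) (N : ℕ)
    (tstar : Fin A) (t' : Fin B)
    (U : (Fin A × Fin B → ℂ) → (Fin A × Fin B → ℂ))
    (hU : ∀ ψ i, U ψ i = if i = (tstar, t') then -ψ i else ψ i)
    (Dloc : (Fin A × Fin B → ℂ) → (Fin A × Fin B → ℂ))
    (hDloc : ∀ ψ u v, Dloc ψ (u, v) = (2 / (B : ℂ)) * (∑ v' : Fin B, ψ (u, v')) - ψ (u, v))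
    (G₃ : (Fin A × Fin B → ℂ) → (Fin A × Fin B → ℂ)) (hG₃ : G₃ = Dloc ∘ U)
    (θ₁ θ' : ℝ)
    (hθ' : θ' = Real.arcsin (1 / Real.sqrt B))
    (p₁ : ℕ) (C : ℝ)
    (v : Fin A × Fin B → ℂ)
    (hv : ∀ i, v i = if i = (tstar, t') then ((Real.sin ((2 * p₁ + 1) * θ₁) : ℝ) : ℂ)
      else ((C / Real.sqrt ((N : ℝ) - 1) : ℝ) : ℂ)) :
    ∀ p₂ : ℕ,
      (G₃^[p₂] v (tstar, t') =
        ((Real.sin ((2 * p₁ + 1) * θ₁) * Real.cos (2 * p₂ * θ') +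
            Real.sqrt ((B : ℝ) - 1) / Real.sqrt ((N : ℝ) - 1) * C *
              Real.sin (2 * p₂ * θ') : ℝ) : ℂ)) ∧
      (∀ v' : Fin B, v' ≠ t' → G₃^[p₂] v (tstar, v') =
        (((-(Real.sin ((2 * p₁ + 1) * θ₁) * Real.sin (2 * p₂ * θ')) +
            Real.sqrt ((B : ℝ) - 1) / Real.sqrt ((N : ℝ) - 1) * C *
              Real.cos (2 * p₂ * θ')) / Real.sqrt ((B : ℝ) - 1) : ℝ) : ℂ)) ∧
      (∀ (u : Fin A) (v' : Fin B), u ≠ tstar → G₃^[p₂] v (u, v') =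
        ((C / Real.sqrt ((N : ℝ) - 1) : ℝ) : ℂ)) := by
  intro p₂
  set s := sin ((2 * p₁ + 1) * θ₁)
  set r := √((B : ℝ) - 1)
  set g := C / √((N : ℝ) - 1)
  have hr : r ≠ 0 := (sqrt_pos.2 (by linarith [(Nat.ofNat_le_cast.2 hB : (2 : ℝ) ≤ B)])).ne'
  have hG : G₃ = rowDiffusion ∘ phaseFlip (tstar, t') := by
    have hD : Dloc = rowDiffusion := by
      funext ψ ⟨u, w⟩
      simp [hDloc, rowDiffusion]
    rw [hG₃, hD, show U = phaseFlip (tstar, t') from funext fun ψ => funext (hU ψ)]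
  have hv₀ : v = markedRowState (tstar, t') s ↑(r / √((N : ℝ) - 1) * C / r) g := by
    rw [show r / √((N : ℝ) - 1) * C / r = g by
      rw [mul_div_right_comm, div_div_cancel_left' hr, inv_mul_eq_div]]
    funext ⟨u, w⟩
    by_cases hu : u = tstar <;> by_cases hw : w = t' <;> simp [hv, markedRowState, hu, hw]
  have hstep := rowDiffusion_phaseFlip_markedRowState_eq_rotation (Fintype.card_fin B) hB
    (tstar, t') g
  rw [← hθ'] at hstep
  have hiter := Function.iterate_apply_eq_of_rotation
    (G := rowDiffusion ∘ phaseFlip (tstar, t'))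
    (fun x y => markedRowState (tstar, t') (x : ℂ) ↑(y / r) g) _ hstep
    p₂ s (r / √((N : ℝ) - 1) * C)
  rw [hG, hv₀, hiter, show (p₂ : ℝ) * (2 * θ') = 2 * p₂ * θ' by ring]
  refine ⟨?_, fun w hw => ?_, fun u w hu => ?_⟩
  · simp only [markedRowState, if_true]
    congr 1
    ring
  · simp only [markedRowState, if_true, hw, if_false]
    congr 1
    ring
  · simp only [markedRowState, hu, if_false]

/-- Lemma 3 of the paper: the explicit state after p₂ iterations of the local Grover
operator applied to the state produced by p₁ global Grover iterations. -/
theorem stmt_11 (A B : ℕ) (hA : 2 ≤ A) (hB : 2 ≤ B) (N : ℕ) (hN : N = A * B)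
    (tstar : Fin A) (t' : Fin B)
    (U : (Fin A × Fin B → ℂ) → (Fin A × Fin B → ℂ))
    (hU : ∀ ψ i, U ψ i = if i = (tstar, t') then -ψ i else ψ i)
    (Dloc : (Fin A × Fin B → ℂ) → (Fin A × Fin B → ℂ))
    (hDloc : ∀ ψ u v, Dloc ψ (u, v) = (2 / (B : ℂ)) * (∑ v' : Fin B, ψ (u, v')) - ψ (u, v))
    (G₃ : (Fin A × Fin B → ℂ) → (Fin A × Fin B → ℂ)) (hG₃ : G₃ = Dloc ∘ U)
    (θ₁ θ' : ℝ)
    (hθ₁ : θ₁ = Real.arcsin (1 / Real.sqrt N))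
    (hθ' : θ' = Real.arcsin (1 / Real.sqrt B))
    (p₁ : ℕ) (C : ℝ) (hC : C = Real.cos ((2 * p₁ + 1) * θ₁))
    (v : Fin A × Fin B → ℂ)
    (hv : ∀ i, v i = if i = (tstar, t') then ((Real.sin ((2 * p₁ + 1) * θ₁) : ℝ) : ℂ)
      else ((C / Real.sqrt ((N : ℝ) - 1) : ℝ) : ℂ)) :
    ∀ p₂ : ℕ,
      (G₃^[p₂] v (tstar, t') =
        ((Real.sin ((2 * p₁ + 1) * θ₁) * Real.cos (2 * p₂ * θ') +
            Real.sqrt ((B : ℝ) - 1) / Real.sqrt ((N : ℝ) - 1) * C *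
              Real.sin (2 * p₂ * θ') : ℝ) : ℂ)) ∧
      (∀ v' : Fin B, v' ≠ t' → G₃^[p₂] v (tstar, v') =
        (((-(Real.sin ((2 * p₁ + 1) * θ₁) * Real.sin (2 * p₂ * θ')) +
            Real.sqrt ((B : ℝ) - 1) / Real.sqrt ((N : ℝ) - 1) * C *
              Real.cos (2 * p₂ * θ')) / Real.sqrt ((B : ℝ) - 1) : ℝ) : ℂ)) ∧
      (∀ (u : Fin A) (v' : Fin B), u ≠ tstar → G₃^[p₂] v (u, v') =
        ((C / Real.sqrt ((N : ℝ) - 1) : ℝ) : ℂ)) :=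
  stmt_11_general A B hB N tstar t' U hU Dloc hDloc G₃ hG₃ θ₁ θ' hθ' p₁ C v hv
end
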